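/- Define φ_off(r, t) := (Q0/(4πD))·(E1(‖r − r0‖²/(2Ds + 4D(t − t0))) − E1(‖r − r0‖²/(2Ds + 4D(t − t0 − τ)))) for r ≠ r0 and t > t0 + τ. Then lim_{D→0+} φ_off(r, t) = (Q0 τ/(2πDs))·exp(−‖r − r0‖²/(2Ds)), and lim_{D→∞} φ_off(r, t) = 0. -/

import Mathlib

open Real MeasureTheory Filter

/-- The exponential integral of order one. -/
noncomputable def E1 (v : ℝ) : ℝ := ∫ u in Set.Ioi v, u⁻¹ * Real.exp (-u)

/-!
`E1 v₁ - E1 v₂ = ∫ u in v₁..v₂, u⁻¹ * exp (-u)` with a decreasing integrand, so the difference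
lies between `v₂ - v₁` times the integrand at either endpoint. With `vᵢ = a / dᵢ` and
`dᵢ = 2 Ds + 4 D sᵢ`, the length `v₂ - v₁ = a (d₁ - d₂) / (d₁ d₂)` carries the factor
`d₁ - d₂ = 4 D τ`, which cancels the `1 / D` in front: `φ_off / Q0` lies between
`τ e^{-a/d₂} / (π d₁)` and `τ e^{-a/d₁} / (π d₂)`. As `D → 0⁺` both bounds tend to
`τ e^{-a/(2 Ds)} / (2 π Ds)`; as `D → ∞` they lie between `0` and `τ / (π d₂) → 0`.
-/

open Set Topology

theorem AntitoneOn.mul_sub_le_intervalIntegral {f : ℝ → ℝ} {a b : ℝ} (hab : a ≤ b)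
    (hf : AntitoneOn f (Icc a b)) : f b * (b - a) ≤ ∫ x in a..b, f x := by
  have hint : IntervalIntegrable f volume a b :=
    AntitoneOn.intervalIntegrable (by rwa [uIcc_of_le hab])
  have h := intervalIntegral.integral_mono_on hab intervalIntegrable_const hint
    fun x hx => hf hx (right_mem_Icc.2 hab) hx.2
  simpa [mul_comm] using h

theorem AntitoneOn.intervalIntegral_le_mul_sub {f : ℝ → ℝ} {a b : ℝ} (hab : a ≤ b)
    (hf : AntitoneOn f (Icc a b)) : ∫ x in a..b, f x ≤ f a * (b - a) := by
  have hint : IntervalIntegrable f volume a b :=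
    AntitoneOn.intervalIntegrable (by rwa [uIcc_of_le hab])
  have h := intervalIntegral.integral_mono_on hab hint intervalIntegrable_const
    fun x hx => hf (left_mem_Icc.2 hab) hx hx.1
  simpa [mul_comm] using h

theorem antitoneOn_inv_mul_exp_neg : AntitoneOn (fun u : ℝ => u⁻¹ * exp (-u)) (Ioi 0) := by
  intro x hx y _ hxy
  have hx₀ : (0 : ℝ) < x := hx
  dsimp only
  gcongr

theorem integrableOn_inv_mul_exp_neg_Ioi {v : ℝ} (hv : 0 < v) :
    IntegrableOn (fun u : ℝ => u⁻¹ * exp (-u)) (Ioi v) := by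
  refine ((exp_neg_integrableOn_Ioi v one_pos).const_mul v⁻¹).mono' ?_ ?_
  · exact (continuousOn_inv₀.mono fun u hu => (hv.trans hu).ne').mul
      (continuous_exp.comp continuous_neg).continuousOn |>.aestronglyMeasurable measurableSet_Ioi
  · filter_upwards [ae_restrict_mem measurableSet_Ioi] with u hu
    have hu₀ : 0 < u := hv.trans hu
    rw [norm_of_nonneg (by positivity), neg_one_mul]
    gcongr
    exact hu.le

theorem E1_sub_E1 {v₁ v₂ : ℝ} (hv₁ : 0 < v₁) (hv₂ : 0 < v₂) :
    E1 v₁ - E1 v₂ = ∫ u in v₁..v₂, u⁻¹ * exp (-u) :=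
  intervalIntegral.integral_Ioi_sub_Ioi' (integrableOn_inv_mul_exp_neg_Ioi hv₁)
    (integrableOn_inv_mul_exp_neg_Ioi hv₂)

theorem E1_div_sub_E1_div_bounds {a d₁ d₂ : ℝ} (ha : 0 < a) (hd₂ : 0 < d₂)
    (hd : d₂ ≤ d₁) :
    exp (-(a / d₂)) * ((d₁ - d₂) / d₁) ≤ E1 (a / d₁) - E1 (a / d₂) ∧
      E1 (a / d₁) - E1 (a / d₂) ≤ exp (-(a / d₁)) * ((d₁ - d₂) / d₂) := by
  have hd₁ : 0 < d₁ := hd₂.trans_le hd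
  have hv : a / d₁ ≤ a / d₂ := div_le_div_of_nonneg_left ha.le hd₂ hd
  have hanti : AntitoneOn (fun u : ℝ => u⁻¹ * exp (-u)) (Icc (a / d₁) (a / d₂)) :=
    antitoneOn_inv_mul_exp_neg.mono fun u hu => (div_pos ha hd₁).trans_le hu.1
  rw [E1_sub_E1 (by positivity) (by positivity)]
  constructor
  · convert hanti.mul_sub_le_intervalIntegral hv using 1
    field_simp
  · convert hanti.intervalIntegral_le_mul_sub hv using 1
    field_simp

/-- `φ_off / Q0` as a function of `D`, where `a = ‖r - r0‖ ^ 2`, `s₁ = t - t0` and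
`s₂ = t - t0 - τ`. -/
noncomputable def offKernel (a Ds s₁ s₂ D : ℝ) : ℝ :=
  (E1 (a / (2 * Ds + 4 * D * s₁)) - E1 (a / (2 * Ds + 4 * D * s₂))) / (4 * π * D)

section offKernel

variable {a Ds s₁ s₂ : ℝ}

theorem offKernel_bounds {D : ℝ} (ha : 0 < a) (hD : 0 < D) (hs : s₂ ≤ s₁)
    (hd₂ : 0 < 2 * Ds + 4 * D * s₂) :
    (s₁ - s₂) * exp (-(a / (2 * Ds + 4 * D * s₂))) / (π * (2 * Ds + 4 * D * s₁)) ≤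
        offKernel a Ds s₁ s₂ D ∧
      offKernel a Ds s₁ s₂ D ≤
        (s₁ - s₂) * exp (-(a / (2 * Ds + 4 * D * s₁))) / (π * (2 * Ds + 4 * D * s₂)) := by
  have hd : 2 * Ds + 4 * D * s₂ ≤ 2 * Ds + 4 * D * s₁ := by nlinarith
  have hd₁ : 0 < 2 * Ds + 4 * D * s₁ := hd₂.trans_le hd
  obtain ⟨hl, hu⟩ := E1_div_sub_E1_div_bounds ha hd₂ hd
  have hc : 0 < 4 * π * D := by positivity
  rw [offKernel]
  constructor
  · refine Eq.trans_le ?_ ((div_le_div_iff_of_pos_right hc).2 hl)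
    field_simp
    ring
  · refine ((div_le_div_iff_of_pos_right hc).2 hu).trans_eq ?_
    field_simp
    ring

theorem tendsto_offKernel_nhdsGT_zero (ha : 0 < a) (hDs : 0 < Ds) (hs : s₂ ≤ s₁) :
    Tendsto (offKernel a Ds s₁ s₂) (𝓝[>] 0)
      (𝓝 ((s₁ - s₂) * exp (-(a / (2 * Ds))) / (π * (2 * Ds)))) := by
  have hbound (s s' : ℝ) : Tendsto
      (fun D => (s₁ - s₂) * exp (-(a / (2 * Ds + 4 * D * s))) / (π * (2 * Ds + 4 * D * s')))
      (𝓝[>] 0) (𝓝 ((s₁ - s₂) * exp (-(a / (2 * Ds))) / (π * (2 * Ds)))) := by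
    have hcont : ContinuousAt (fun D => (s₁ - s₂) * exp (-(a / (2 * Ds + 4 * D * s))) /
        (π * (2 * Ds + 4 * D * s'))) 0 := by
      fun_prop (disch := simp [hDs.ne', pi_ne_zero])
    simpa using hcont.tendsto.mono_left nhdsWithin_le_nhds
  have hd₂ : ∀ᶠ D in 𝓝[>] 0, 0 < 2 * Ds + 4 * D * s₂ := by
    have hlim : Tendsto (fun D : ℝ => 2 * Ds + 4 * D * s₂) (𝓝 0) (𝓝 (2 * Ds)) :=
      (by fun_prop : Continuous fun D : ℝ => 2 * Ds + 4 * D * s₂).tendsto' 0 _ (by simp)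
    exact nhdsWithin_le_nhds (hlim.eventually_const_lt (by positivity))
  refine tendsto_of_tendsto_of_tendsto_of_le_of_le' (hbound s₂ s₁) (hbound s₁ s₂) ?_ ?_ <;>
    filter_upwards [self_mem_nhdsWithin, hd₂] with D hD hd₂
  exacts [(offKernel_bounds ha hD hs hd₂).1, (offKernel_bounds ha hD hs hd₂).2]

theorem tendsto_offKernel_atTop (ha : 0 < a) (hs₂ : 0 < s₂) (hs : s₂ ≤ s₁) :
    Tendsto (offKernel a Ds s₁ s₂) atTop (𝓝 0) := by
  have hd : Tendsto (fun D => 2 * Ds + 4 * D * s₂) atTop atTop :=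
    tendsto_atTop_add_const_left _ _ ((tendsto_id.const_mul_atTop four_pos).atTop_mul_const hs₂)
  have hupper : Tendsto (fun D => (s₁ - s₂) / (π * (2 * Ds + 4 * D * s₂))) atTop (𝓝 0) :=
    tendsto_const_nhds.div_atTop (hd.const_mul_atTop pi_pos)
  refine tendsto_of_tendsto_of_tendsto_of_le_of_le' tendsto_const_nhds hupper ?_ ?_ <;>
    filter_upwards [eventually_gt_atTop 0, hd.eventually_gt_atTop 0] with D hD hd₂ <;>
    obtain ⟨hl, hu⟩ := offKernel_bounds ha hD hs hd₂ <;>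
    have hd₁ : 0 < 2 * Ds + 4 * D * s₁ := by nlinarith
  · exact (div_nonneg (mul_nonneg (sub_nonneg.2 hs) (exp_pos _).le) (by positivity)).trans hl
  · refine hu.trans (div_le_div_of_nonneg_right ?_ (by positivity))
    exact mul_le_of_le_one_right (sub_nonneg.2 hs) (exp_le_one_iff.2 (neg_nonpos.2 (by positivity)))

end offKernel

theorem limit_diffusion_off_general (Q0 Ds t0 τ t : ℝ)
    (r r0 : EuclideanSpace ℝ (Fin 2))
    (hDs : 0 < Ds) (hτ : 0 < τ) (ht : t0 + τ < t) (hr : r ≠ r0) :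
    Tendsto (fun D : ℝ =>
        (Q0 / (4 * Real.pi * D)) *
          (E1 (‖r - r0‖ ^ 2 / (2 * Ds + 4 * D * (t - t0)))
            - E1 (‖r - r0‖ ^ 2 / (2 * Ds + 4 * D * (t - t0 - τ)))))
      (nhdsWithin 0 (Set.Ioi 0))
      (nhds ((Q0 * τ / (2 * Real.pi * Ds)) *
        Real.exp (-‖r - r0‖ ^ 2 / (2 * Ds)))) ∧
    Tendsto (fun D : ℝ =>
        (Q0 / (4 * Real.pi * D)) *
          (E1 (‖r - r0‖ ^ 2 / (2 * Ds + 4 * D * (t - t0)))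
            - E1 (‖r - r0‖ ^ 2 / (2 * Ds + 4 * D * (t - t0 - τ)))))
      atTop (nhds 0) := by
  have ha : 0 < ‖r - r0‖ ^ 2 := pow_pos (norm_pos_iff.2 (sub_ne_zero.2 hr)) 2
  have hφ : (fun D : ℝ => (Q0 / (4 * π * D)) *
      (E1 (‖r - r0‖ ^ 2 / (2 * Ds + 4 * D * (t - t0)))
        - E1 (‖r - r0‖ ^ 2 / (2 * Ds + 4 * D * (t - t0 - τ))))) =
      fun D => Q0 * offKernel (‖r - r0‖ ^ 2) Ds (t - t0) (t - t0 - τ) D := by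
    funext D
    rw [offKernel]
    ring
  rw [hφ]
  constructor
  · convert (tendsto_offKernel_nhdsGT_zero (s₁ := t - t0) (s₂ := t - t0 - τ) ha hDs
      (by linarith)).const_mul Q0 using 2
    rw [neg_div]
    field_simp
    ring
  · simpa using (tendsto_offKernel_atTop ha (by linarith) (by linarith)).const_mul Q0

theorem limit_diffusion_off (Q0 Ds t0 τ t : ℝ)
    (r r0 : EuclideanSpace ℝ (Fin 2))
    (hQ : 0 < Q0) (hDs : 0 < Ds) (hτ : 0 < τ) (ht : t0 + τ < t) (hr : r ≠ r0) :
    Tendsto (fun D : ℝ =>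
        (Q0 / (4 * Real.pi * D)) *
          (E1 (‖r - r0‖ ^ 2 / (2 * Ds + 4 * D * (t - t0)))
            - E1 (‖r - r0‖ ^ 2 / (2 * Ds + 4 * D * (t - t0 - τ)))))
      (nhdsWithin 0 (Set.Ioi 0))
      (nhds ((Q0 * τ / (2 * Real.pi * Ds)) *
        Real.exp (-‖r - r0‖ ^ 2 / (2 * Ds)))) ∧
    Tendsto (fun D : ℝ =>
        (Q0 / (4 * Real.pi * D)) *
          (E1 (‖r - r0‖ ^ 2 / (2 * Ds + 4 * D * (t - t0)))
            - E1 (‖r - r0‖ ^ 2 / (2 * Ds + 4 * D * (t - t0 - τ)))))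
      atTop (nhds 0) :=
  limit_diffusion_off_general Q0 Ds t0 τ t r r0 hDs hτ ht hr
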